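/- Uniqueness via jump seminorm on periodic meshes: let w_h be a piecewise polynomial of degree ≤ k on a periodic partition of I such that H^{λ}(w_h, φ) = 0 for all piecewise polynomials φ of degree ≤ k, with λ > 1/2, and ∫_I w_h = 0. Then all jumps of w_h vanish and, if additionally H^{λ}(w_h,w_h)=0 forces Σ_j[w_h]² = 0 and w_h is a global constant, it follows that w_h ≡ 0. -/

import Mathlib

open scoped BigOperators

/-- Left (minus-side) trace at node `x_{j+1/2}`. -/
def dgTraceM (N : ℕ) [NeZero N] (x : Fin (N + 1) → ℝ) (w : Fin N → ℝ → ℝ) (j : Fin N) : ℝ :=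
  w j (x j.succ)

/-- Right (plus-side) trace at node `x_{j+1/2}` (periodic wrap). -/
def dgTraceP (N : ℕ) [NeZero N] (x : Fin (N + 1) → ℝ) (w : Fin N → ℝ → ℝ) (j : Fin N) : ℝ :=
  w (j + 1) (x (j + 1 : Fin N).castSucc)

/-- The DG operator `H^α(w, v)` with weighted flux `w^{(α)} = α w^- + (1-α) w^+`. -/
noncomputable def dgH (N : ℕ) [NeZero N] (x : Fin (N + 1) → ℝ) (α : ℝ)
    (w v v' : Fin N → ℝ → ℝ) : ℝ :=
  ∑ j : Fin N,
    ((∫ t in (x j.castSucc)..(x j.succ), w j t * v' j t)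
      - (α * dgTraceM N x w j + (1 - α) * dgTraceP N x w j) * dgTraceM N x v j
      + (α * dgTraceM N x w (j - 1) + (1 - α) * dgTraceP N x w (j - 1)) *
          dgTraceP N x v (j - 1))

/-- Membership in the DG space `V_h`: piecewise polynomial of degree `≤ k`. -/
def isDGPoly (N k : ℕ) (w : Fin N → ℝ → ℝ) : Prop :=
  ∀ j : Fin N, ∃ p : Polynomial ℝ, p.natDegree ≤ k ∧ w j = fun t => p.eval t

/-! Testing `H^λ(w_h, ·)` against `w_h` itself gives `(1/2 - λ) Σ_j [w_h]²_{j-1/2} = 0`, so `w_h`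
has no jumps since `λ > 1/2`. For such a `w_h` the fluxes cancel the boundary terms of cellwise
integration by parts, so testing against the piecewise derivative `w_h'` gives
`-Σ_j ∫_{I_j} (w_h')² = 0`. Hence `w_h` is constant on each cell, the constants agree across the
periodic nodes, and the zero mean forces the common constant to vanish. -/

open Set intervalIntegral

theorem integral_mul_deriv_of_contDiff {f g : ℝ → ℝ} (hf : ContDiff ℝ 1 f) (hg : ContDiff ℝ 1 g)
    (a b : ℝ) :
    ∫ t in a..b, f t * deriv g t = f b * g b - f a * g a - ∫ t in a..b, deriv f t * g t :=
  integral_mul_deriv_eq_deriv_mul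
    (fun t _ => ((hf.differentiable one_ne_zero) t).hasDerivAt)
    (fun t _ => ((hg.differentiable one_ne_zero) t).hasDerivAt)
    ((hf.continuous_deriv le_rfl).intervalIntegrable _ _)
    ((hg.continuous_deriv le_rfl).intervalIntegrable _ _)

theorem integral_mul_deriv_self_of_contDiff {f : ℝ → ℝ} (hf : ContDiff ℝ 1 f) (a b : ℝ) :
    ∫ t in a..b, f t * deriv f t = (f b ^ 2 - f a ^ 2) / 2 := by
  have h := integral_mul_deriv_of_contDiff hf hf a b
  simp only [mul_comm (deriv f _)] at h
  linarith

theorem eq_zero_of_integral_sq_eq_zero {g : ℝ → ℝ} {a b : ℝ} (hab : a < b) (hg : Continuous g)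
    (h : ∫ t in a..b, g t ^ 2 = 0) : ∀ t ∈ Icc a b, g t = 0 := by
  intro c hc
  by_contra hne
  exact (integral_pos hab (hg.pow 2).continuousOn (fun _ _ => sq_nonneg _)
    ⟨c, hc, sq_pos_of_ne_zero hne⟩).ne' h

theorem eq_of_deriv_eq_zero_on_Icc {f : ℝ → ℝ} {a b : ℝ} (hf : Differentiable ℝ f)
    (h : ∀ t ∈ Icc a b, deriv f t = 0) : ∀ t ∈ Icc a b, f t = f a :=
  constant_of_has_deriv_right_zero hf.continuous.continuousOn fun t ht =>
    h t (Ico_subset_Icc_self ht) ▸ (hf t).hasDerivAt.hasDerivWithinAt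

theorem Fin.apply_eq_apply_zero_of_apply_add_one {N : ℕ} [NeZero N] {α : Type*}
    {f : Fin N → α} (h : ∀ j, f (j + 1) = f j) (j : Fin N) : f j = f 0 := by
  obtain ⟨n, rfl⟩ := Nat.exists_eq_succ_of_ne_zero (NeZero.ne N)
  induction j using Fin.induction with
  | zero => rfl
  | succ i ih => rw [← Fin.coeSucc_eq_succ, h, ih]

theorem Polynomial.deriv_eval (p : Polynomial ℝ) :
    _root_.deriv (fun t => p.eval t) = fun t => p.derivative.eval t :=
  _root_.funext fun _ => p.deriv

theorem Polynomial.contDiff_one_eval (p : Polynomial ℝ) : ContDiff ℝ 1 fun t => p.eval t :=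
  contDiff_one_iff_deriv.mpr ⟨p.differentiable, p.deriv_eval ▸ p.derivative.continuous⟩

namespace isDGPoly

variable {N k : ℕ} {w : Fin N → ℝ → ℝ}

theorem contDiff (hw : isDGPoly N k w) (j : Fin N) : ContDiff ℝ 1 (w j) := by
  obtain ⟨p, -, hp⟩ := hw j
  exact hp ▸ p.contDiff_one_eval

theorem deriv (hw : isDGPoly N k w) : isDGPoly N k fun j => deriv (w j) := by
  intro j
  obtain ⟨p, hdeg, hp⟩ := hw j
  refine ⟨Polynomial.derivative p, (Polynomial.natDegree_derivative_le p).trans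
    (Nat.sub_le_of_le_add (Nat.le_add_right_of_le hdeg)), ?_⟩
  show _root_.deriv (w j) = _
  rw [hp, p.deriv_eval]

end isDGPoly

section DGOperator

variable {N : ℕ} [NeZero N] {x : Fin (N + 1) → ℝ} {α : ℝ} {w v : Fin N → ℝ → ℝ}

theorem dgTraceP_sub_one (j : Fin N) : dgTraceP N x w (j - 1) = w j (x j.castSucc) := by
  simp only [dgTraceP, sub_add_cancel]

theorem dgH_self (hw : ∀ j, ContDiff ℝ 1 (w j)) :
    dgH N x α w w (fun j => deriv (w j))
      = (1 / 2 - α) * ∑ j, (dgTraceP N x w j - dgTraceM N x w j) ^ 2 := by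
  have hcell : ∀ j, ∫ t in (x j.castSucc)..(x j.succ), w j t * deriv (w j) t
      = (dgTraceM N x w j ^ 2 - dgTraceP N x w (j - 1) ^ 2) / 2 := fun j => by
    rw [integral_mul_deriv_self_of_contDiff (hw j), dgTraceP_sub_one]; rfl
  set M := dgTraceM N x w
  set P := dgTraceP N x w
  have hshift : ∀ g : Fin N → ℝ, ∑ j, g (j - 1) = ∑ j, g j :=
    (Equiv.subRight 1).sum_comp
  rw [dgH, Finset.mul_sum]
  simp only [hcell]
  calc _ = ∑ j, (M j ^ 2 / 2 - (α * M j + (1 - α) * P j) * M j)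
          + ∑ j, (-P (j - 1) ^ 2 / 2 + (α * M (j - 1) + (1 - α) * P (j - 1)) * P (j - 1)) := by
        rw [← Finset.sum_add_distrib]
        congr 1; ext j; ring
    _ = _ := by
        rw [hshift fun j => -P j ^ 2 / 2 + (α * M j + (1 - α) * P j) * P j,
          ← Finset.sum_add_distrib]
        congr 1; ext j; ring

theorem dgH_eq_neg_sum_integral_deriv_mul (hw : ∀ j, ContDiff ℝ 1 (w j))
    (hv : ∀ j, ContDiff ℝ 1 (v j)) (hjump : ∀ j, dgTraceP N x w j = dgTraceM N x w j) :
    dgH N x α w v (fun j => deriv (v j))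
      = -∑ j, ∫ t in (x j.castSucc)..(x j.succ), deriv (w j) t * v j t := by
  rw [dgH, ← Finset.sum_neg_distrib]
  refine Finset.sum_congr rfl fun j _ => ?_
  rw [integral_mul_deriv_of_contDiff (hw j) (hv j), hjump j, ← hjump (j - 1)]
  simp only [dgTraceM, dgTraceP_sub_one]
  ring

end DGOperator

theorem const_eq_zero_of_sum_integral_eq_zero {N : ℕ} {x : Fin (N + 1) → ℝ} [NeZero N]
    (hx : ∀ j : Fin N, x j.castSucc < x j.succ) {w : Fin N → ℝ → ℝ} {c : ℝ}
    (hc : ∀ j, ∀ t ∈ Icc (x j.castSucc) (x j.succ), w j t = c)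
    (hmean : ∑ j : Fin N, ∫ t in (x j.castSucc)..(x j.succ), w j t = 0) : c = 0 := by
  have hlen : 0 < ∑ j : Fin N, (x j.succ - x j.castSucc) :=
    Finset.sum_pos (fun j _ => sub_pos.mpr (hx j)) Finset.univ_nonempty
  have : ∑ j : Fin N, ∫ t in (x j.castSucc)..(x j.succ), w j t
      = c * ∑ j : Fin N, (x j.succ - x j.castSucc) := by
    rw [Finset.mul_sum]
    refine Finset.sum_congr rfl fun j _ => ?_
    rw [integral_congr (g := fun _ => c) fun t ht => hc j t (uIcc_of_le (hx j).le ▸ ht),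
      integral_const, smul_eq_mul, mul_comm]
  rw [this] at hmean
  exact (mul_eq_zero.mp hmean).resolve_right hlen.ne'

theorem dg_uniqueness_zero_mean_general
    (N : ℕ) [NeZero N] (k : ℕ) (x : Fin (N + 1) → ℝ)
    (hx : ∀ j : Fin N, x j.castSucc < x j.succ)
    (lam : ℝ) (hlam : 1 / 2 < lam)
    (w : Fin N → ℝ → ℝ) (hw : isDGPoly N k w)
    (hH : ∀ φ : Fin N → ℝ → ℝ, isDGPoly N k φ →
      dgH N x lam w φ (fun j => deriv (φ j)) = 0)
    (hmean : ∑ j : Fin N, ∫ t in (x j.castSucc)..(x j.succ), w j t = 0) :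
    (∀ j : Fin N, dgTraceP N x w j - dgTraceM N x w j = 0) ∧
      ∀ j : Fin N, ∀ t ∈ Set.Icc (x j.castSucc) (x j.succ), w j t = 0 := by
  have hjump : ∀ j, dgTraceP N x w j = dgTraceM N x w j := by
    have hsq := hH w hw
    rw [dgH_self hw.contDiff] at hsq
    intro j
    refine sub_eq_zero.mp <| pow_eq_zero_iff two_ne_zero |>.mp ?_
    exact (Finset.sum_eq_zero_iff_of_nonneg fun i _ => sq_nonneg _).mp
      ((mul_eq_zero.mp hsq).resolve_left (sub_ne_zero.mpr hlam.ne)) j (Finset.mem_univ j)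
  have hflat : ∀ j, ∀ t ∈ Icc (x j.castSucc) (x j.succ), deriv (w j) t = 0 := by
    have hsq := hH _ hw.deriv
    rw [dgH_eq_neg_sum_integral_deriv_mul hw.contDiff hw.deriv.contDiff hjump, neg_eq_zero] at hsq
    simp only [← sq] at hsq
    intro j
    refine eq_zero_of_integral_sq_eq_zero (hx j) (hw.deriv.contDiff j).continuous ?_
    exact (Finset.sum_eq_zero_iff_of_nonneg fun i _ =>
      integral_nonneg (hx i).le fun _ _ => sq_nonneg _).mp hsq j (Finset.mem_univ j)
  have hcell : ∀ j, ∀ t ∈ Icc (x j.castSucc) (x j.succ), w j t = w j (x j.castSucc) :=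
    fun j => eq_of_deriv_eq_zero_on_Icc ((hw.contDiff j).differentiable one_ne_zero) (hflat j)
  have hconst : ∀ j, w j (x j.castSucc) = w 0 (x 0) :=
    Fin.apply_eq_apply_zero_of_apply_add_one (f := fun j => w j (x j.castSucc)) fun j =>
      (hjump j).trans (hcell j _ (right_mem_Icc.mpr (hx j).le))
  have hzero : w 0 (x 0) = 0 :=
    const_eq_zero_of_sum_integral_eq_zero hx (fun j t ht => (hcell j t ht).trans (hconst j)) hmean
  exact ⟨fun j => sub_eq_zero.mpr (hjump j),
    fun j t ht => (hcell j t ht).trans ((hconst j).trans hzero)⟩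

/-- uniqueness via the jump seminorm on periodic meshes. If
`w_h ∈ V_h` satisfies `H^λ(w_h, φ) = 0` for all `φ ∈ V_h` with `λ > 1/2`, and
`∫_I w_h = 0`, then all jumps of `w_h` vanish and `w_h ≡ 0`. -/
theorem dg_uniqueness_zero_mean
    (N : ℕ) [NeZero N] (k : ℕ) (x : Fin (N + 1) → ℝ)
    (hx : ∀ j : Fin N, x j.castSucc < x j.succ)
    (hx0 : x 0 = 0) (hx2π : x (Fin.last N) = 2 * Real.pi)
    (lam : ℝ) (hlam : 1 / 2 < lam)
    (w : Fin N → ℝ → ℝ) (hw : isDGPoly N k w)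
    (hH : ∀ φ : Fin N → ℝ → ℝ, isDGPoly N k φ →
      dgH N x lam w φ (fun j => deriv (φ j)) = 0)
    (hmean : ∑ j : Fin N, ∫ t in (x j.castSucc)..(x j.succ), w j t = 0) :
    (∀ j : Fin N, dgTraceP N x w j - dgTraceM N x w j = 0) ∧
      ∀ j : Fin N, ∀ t ∈ Set.Icc (x j.castSucc) (x j.succ), w j t = 0 :=
  dg_uniqueness_zero_mean_general N k x hx lam hlam w hw hH hmean
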